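/- Fix m, n ≥ 0 and let f, g : ℤ → ℤ be nondecreasing functions with f(x + m + 1) = f(x) + n + 1 and g(x + m + 1) = g(x) + n + 1 for all x. Suppose f(x) ≡ g(x) (mod n+1) for all x ∈ ℤ, and suppose f is not constant modulo n+1 (i.e. there exist x, y with f(x) ≢ f(y) mod n+1). Then f − g is a constant function whose value is a multiple of n+1; in particular f and g represent the same morphism of the cyclic category Λ. -/

import Mathlib

/-!
Let `M = m + 1`, `N = n + 1` and `d = f - g`, which is `M`-periodic and, by hypothesis, constant
modulo `N`. On a window `[a, a + M)` the maps `f` and `g` both rise by at most `N`, so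
`d` varies by at most `N`. If `d b < d a`, periodicity and `d b ≡ d a` give some `y` in the
window with `d y = d a - N`, forcing `f y = f a` and `g y = g a + N`. Then `f` is constant on
`[a, y]`, and `g` is constant on `[y, a + M)`, where `f ≡ g` modulo `N`. So `f` is constant modulo `N` on the
window, hence everywhere, contradicting the hypothesis on `f`.
-/

open Function Set

theorem Function.Periodic.eq_of_forall_mem_Ico {G α : Type*} [AddCommGroup G] [LinearOrder G]
    [IsOrderedAddMonoid G] [Archimedean G] {φ : G → α} {c a : G} (hφ : Periodic φ c)
    (hc : 0 < c) (h : ∀ x ∈ Ico a (a + c), φ x = φ a) (x : G) : φ x = φ a := by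
  obtain ⟨y, hy, hxy⟩ := hφ.exists_mem_Ico hc x a
  rw [hxy, h y hy]

section Equivariant

variable {M N : ℤ} {f g : ℤ → ℤ}

lemma periodic_sub_of_map_add (hfe : ∀ x, f (x + M) = f x + N)
    (hge : ∀ x, g (x + M) = g x + N) : Periodic (f - g) M := fun x => by
  simp only [Pi.sub_apply, hfe, hge]
  ring

lemma periodic_emod_of_map_add (hfe : ∀ x, f (x + M) = f x + N) :
    Periodic (fun x => f x % N) M := fun x => by
  simp only [hfe, Int.add_emod_right]

lemma Monotone.mapsTo_Icc_of_map_add (hf : Monotone f) (hfe : ∀ x, f (x + M) = f x + N)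
    (a : ℤ) : MapsTo f (Icc a (a + M)) (Icc (f a) (f a + N)) :=
  fun _ hx => ⟨hf hx.1, hfe a ▸ hf hx.2⟩

lemma exists_mem_Ico_of_sub_lt_sub (hf : Monotone f) (hg : Monotone g)
    (hfe : ∀ x, f (x + M) = f x + N) (hge : ∀ x, g (x + M) = g x + N) (hM : 0 < M)
    (hcong : ∀ x, N ∣ f x - g x) {a b : ℤ} (hlt : f b - g b < f a - g a) :
    ∃ y ∈ Ico a (a + M), f y = f a ∧ g y = g a + N := by
  obtain ⟨y, hy, hdy⟩ := (periodic_sub_of_map_add hfe hge).exists_mem_Ico hM b a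
  simp only [Pi.sub_apply] at hdy
  obtain ⟨hfay, -⟩ := hf.mapsTo_Icc_of_map_add hfe a (Ico_subset_Icc_self hy)
  obtain ⟨-, hgya⟩ := hg.mapsTo_Icc_of_map_add hge a (Ico_subset_Icc_self hy)
  have hN : N ≤ (f a - g a) - (f b - g b) :=
    Int.le_of_dvd (by linarith) (dvd_sub (hcong a) (hcong b))
  exact ⟨y, hy, by linarith, by linarith⟩

lemma modEq_of_mem_Ico_of_eq_of_eq_add (hf : Monotone f) (hg : Monotone g)
    (hge : ∀ x, g (x + M) = g x + N) (hcong : ∀ x, N ∣ f x - g x) {a y : ℤ}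
    (hfy : f y = f a) (hgy : g y = g a + N) : ∀ x ∈ Ico a (a + M), f x ≡ f a [ZMOD N] := by
  intro x hx
  rcases le_total x y with hxy | hyx
  · rw [le_antisymm (hfy ▸ hf hxy) (hf hx.1)]
  · have hgx : g x = g a + N :=
      le_antisymm (hg.mapsTo_Icc_of_map_add hge a (Ico_subset_Icc_self hx)).2 (hgy ▸ hg hyx)
    refine Int.ModEq.symm (Int.modEq_of_dvd ?_)
    have hsplit : f x - f a = (f x - g x) - (f y - g y) := by rw [hfy, hgy, hgx]; ring
    exact hsplit ▸ dvd_sub (hcong x) (hcong y)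

end Equivariant

/-- A morphism of the cyclic category is determined by its underlying map of cyclic sets
whenever the latter is nonconstant: if two equivariant nondecreasing maps `f, g : ℤ → ℤ`
agree modulo `n+1` and `f` is not constant modulo `n+1`, then `f - g` is a constant
multiple of `n+1`, so `f` and `g` represent the same morphism of `Λ`. -/
theorem cyclic_morphism_determined_by_residues (m n : ℕ) (f g : ℤ → ℤ)
    (hf : Monotone f) (hg : Monotone g)
    (hfe : ∀ x : ℤ, f (x + ((m : ℤ) + 1)) = f x + ((n : ℤ) + 1))
    (hge : ∀ x : ℤ, g (x + ((m : ℤ) + 1)) = g x + ((n : ℤ) + 1))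
    (hcong : ∀ x : ℤ, ((n : ℤ) + 1) ∣ (f x - g x))
    (hnc : ∃ x y : ℤ, ¬ ((n : ℤ) + 1) ∣ (f x - f y)) :
    ∃ c : ℤ, ∀ x : ℤ, f x - g x = ((n : ℤ) + 1) * c := by
  have hM : (0 : ℤ) < m + 1 := by positivity
  suffices hle : ∀ a b, f a - g a ≤ f b - g b by
    obtain ⟨c, hc⟩ := hcong 0
    exact ⟨c, fun x => (le_antisymm (hle x 0) (hle 0 x)).trans hc⟩
  intro a b
  by_contra! hlt
  obtain ⟨y, -, hfy, hgy⟩ := exists_mem_Ico_of_sub_lt_sub hf hg hfe hge hM hcong hlt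
  have hres : ∀ x, f x ≡ f a [ZMOD (n + 1)] := (periodic_emod_of_map_add hfe).eq_of_forall_mem_Ico
    hM (modEq_of_mem_Ico_of_eq_of_eq_add hf hg hge hcong hfy hgy)
  obtain ⟨x, z, hxz⟩ := hnc
  exact hxz ((hres z).trans (hres x).symm).dvd
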